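/- Double robustness of the one-step estimating functional (external population): assume ℙ(X̃ = x̃ ∧ R = 0) > 0 and p(X)·e_a(X) ≥ ε a.s. for some ε > 0; set γ := 1/ℙ(X̃ = x̃ ∧ R = 0) and ψ := 𝔼[g_a(X) | X̃ = x̃ ∧ R = 0]. Let g', e', p' : 𝒳 → ℝ be measurable with p'(X)·e'(X) ≥ ε a.s., 0 ≤ p'(X) ≤ 1 a.s., g'(X) square-integrable, and define H := γ·[ 1{X̃ = x̃, R = 0}·g'(X) + 1{A = a, X̃ = x̃, R = 1}·((1 − p'(X))/(p'(X)·e'(X)))·(Y − g'(X)) ]. If either (i) g'(X) = g_a(X) a.s., or (ii) p'(X) = p(X) a.s. and e'(X) = e_a(X) a.s., then 𝔼[H] = ψ. -/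

import Mathlib

open MeasureTheory ProbabilityTheory

/-- The σ-algebra generated by a map into a measurable space. -/
def sigmaGen {Ω β : Type*} [MeasurableSpace β] (f : Ω → β) : MeasurableSpace Ω :=
  MeasurableSpace.comap f inferInstance

private lemma integral_mul_eq_condexp {Ω : Type*} [m0 : MeasurableSpace Ω]
    {μ : Measure Ω} [IsFiniteMeasure μ] {m : MeasurableSpace Ω} (hm : m ≤ m0)
    {f g : Ω → ℝ} (hf : StronglyMeasurable[m] f) (hg : Integrable g μ)
    (hfg : Integrable (fun ω => f ω * g ω) μ) :
    ∫ ω, f ω * g ω ∂μ = ∫ ω, f ω * (condExp m μ g) ω ∂μ := by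
  haveI : IsFiniteMeasure (μ.trim hm) := isFiniteMeasure_trim hm
  have h : condExp m μ (fun ω => f ω * g ω) =ᵐ[μ] fun ω => f ω * (condExp m μ g) ω :=
    condExp_mul_of_stronglyMeasurable_left hf hfg hg
  rw [← integral_condExp hm (f := fun ω => f ω * g ω)]
  exact integral_congr_ae h

/-- double robustness of the one-step estimating functional, external population. -/
theorem double_robustness_external
    {Ω 𝒜 𝒯 𝒳 : Type*}
    [MeasurableSpace Ω]
    [Fintype 𝒜] [Nonempty 𝒜] [DecidableEq 𝒜] [MeasurableSpace 𝒜] [DiscreteMeasurableSpace 𝒜]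
    [Fintype 𝒯] [Nonempty 𝒯] [DecidableEq 𝒯] [MeasurableSpace 𝒯] [DiscreteMeasurableSpace 𝒯]
    [MeasurableSpace 𝒳]
    (P : Measure Ω) [IsProbabilityMeasure P]
    (A : Ω → 𝒜) (R : Ω → Bool) (X : Ω → 𝒳) (em : 𝒳 → 𝒯) (Y : Ω → ℝ)
    (hA : Measurable A) (hR : Measurable R) (hX : Measurable X) (hem : Measurable em)
    (hY : MemLp Y 2 P)
    (a : 𝒜) (xt : 𝒯)
    (pf ea ga : 𝒳 → ℝ) (hpfm : Measurable pf) (heam : Measurable ea) (hgam : Measurable ga)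
    -- participation model: p(X) = E[1{R=1} | σ(X)] a.s.
    (hpf : (fun ω => pf (X ω)) =ᵐ[P]
      condExp (sigmaGen X) P (fun ω => if R ω = true then (1 : ℝ) else 0))
    -- propensity in the multi-source data: p(X)·e_a(X) = E[1{R=1, A=a} | σ(X)] a.s.
    (hea : (fun ω => pf (X ω) * ea (X ω)) =ᵐ[P]
      condExp (sigmaGen X) P (fun ω => if R ω = true ∧ A ω = a then (1 : ℝ) else 0))
    -- outcome regression: 1{R=1, A=a}·E[Y | σ(X,A,R)] = 1{R=1, A=a}·g_a(X) a.s.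
    (hga : (fun ω => (if R ω = true ∧ A ω = a then (1 : ℝ) else 0) *
        condExp (sigmaGen (fun ω => (X ω, A ω, R ω))) P Y ω) =ᵐ[P]
      (fun ω => (if R ω = true ∧ A ω = a then (1 : ℝ) else 0) * ga (X ω)))
    (ε : ℝ) (hε : 0 < ε) (hεpe : ∀ᵐ ω ∂P, ε ≤ pf (X ω) * ea (X ω))
    (hE : 0 < P {ω | em (X ω) = xt ∧ R ω = false})
    (γ ψ : ℝ)
    (hγ : γ = ((P {ω | em (X ω) = xt ∧ R ω = false}).toReal)⁻¹)
    (hψ : ψ = (∫ ω in {ω | em (X ω) = xt ∧ R ω = false}, ga (X ω) ∂P) / (P {ω | em (X ω) = xt ∧ R ω = false}).toReal)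
    (g' e' p' : 𝒳 → ℝ) (hg'm : Measurable g') (he'm : Measurable e') (hp'm : Measurable p')
    (hp'e' : ∀ᵐ ω ∂P, ε ≤ p' (X ω) * e' (X ω))
    (hp'bd : ∀ᵐ ω ∂P, 0 ≤ p' (X ω) ∧ p' (X ω) ≤ 1)
    (hg'L2 : MemLp (fun ω => g' (X ω)) 2 P)
    (H : Ω → ℝ)
    (hH : H = fun ω => γ *
      ((if em (X ω) = xt ∧ R ω = false then (1 : ℝ) else 0) * g' (X ω) +
        (if A ω = a ∧ em (X ω) = xt ∧ R ω = true then (1 : ℝ) else 0) *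
          ((1 - p' (X ω)) / (p' (X ω) * e' (X ω))) * (Y ω - g' (X ω))))
    (hrobust : ((fun ω => g' (X ω)) =ᵐ[P] fun ω => ga (X ω)) ∨
      (((fun ω => p' (X ω)) =ᵐ[P] fun ω => pf (X ω)) ∧
        ((fun ω => e' (X ω)) =ᵐ[P] fun ω => ea (X ω)))) :
    ∫ ω, H ω ∂P = ψ := by
  classical
  -- σ-algebra facts
  have hm1 : sigmaGen X ≤ ‹MeasurableSpace Ω› := hX.comap_le
  have hT : Measurable[sigmaGen (fun ω => (X ω, A ω, R ω))] (fun ω => (X ω, A ω, R ω)) :=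
    Measurable.of_comap_le le_rfl
  have hm2 : sigmaGen (fun ω => (X ω, A ω, R ω)) ≤ ‹MeasurableSpace Ω› :=
    (hX.prodMk (hA.prodMk hR)).comap_le
  have hXm1 : Measurable[sigmaGen X] X := Measurable.of_comap_le le_rfl
  have hXm2 : Measurable[sigmaGen (fun ω => (X ω, A ω, R ω))] X := measurable_fst.comp hT
  have hAm2 : Measurable[sigmaGen (fun ω => (X ω, A ω, R ω))] A :=
    measurable_fst.comp (measurable_snd.comp hT)
  have hRm2 : Measurable[sigmaGen (fun ω => (X ω, A ω, R ω))] R :=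
    measurable_snd.comp (measurable_snd.comp hT)
  have hm12 : sigmaGen X ≤ sigmaGen (fun ω => (X ω, A ω, R ω)) := hXm2.comap_le
  -- strongly measurable building blocks
  have hιm1 : StronglyMeasurable[sigmaGen X] (fun ω => if em (X ω) = xt then (1:ℝ) else 0) :=
    (Measurable.ite (hXm1 (hem (measurableSet_singleton xt))) measurable_const
      measurable_const).stronglyMeasurable
  have hwm1 : StronglyMeasurable[sigmaGen X]
      (fun ω => (1 - p' (X ω)) / (p' (X ω) * e' (X ω))) :=
    (((measurable_const.sub hp'm).div (hp'm.mul he'm)).comp hXm1).stronglyMeasurable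
  have hχsetm2 : MeasurableSet[sigmaGen (fun ω => (X ω, A ω, R ω))] {ω | R ω = true ∧ A ω = a} := by
    have heq : {ω | R ω = true ∧ A ω = a} = R ⁻¹' {true} ∩ A ⁻¹' {a} := by
      ext ω; simp [Set.mem_setOf_eq]
    rw [heq]
    exact (hRm2 (measurableSet_singleton true)).inter (hAm2 (measurableSet_singleton a))
  have hχm2 : StronglyMeasurable[sigmaGen (fun ω => (X ω, A ω, R ω))]
      (fun ω => if R ω = true ∧ A ω = a then (1:ℝ) else 0) :=
    (Measurable.ite hχsetm2 measurable_const measurable_const).stronglyMeasurable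
  have hχRm2 : StronglyMeasurable[sigmaGen (fun ω => (X ω, A ω, R ω))]
      (fun ω => if R ω = true then (1:ℝ) else 0) :=
    (Measurable.ite (hRm2 (measurableSet_singleton true)) measurable_const
      measurable_const).stronglyMeasurable
  -- ambient measurability
  have hιm0 : Measurable (fun ω => if em (X ω) = xt then (1:ℝ) else 0) :=
    ((hιm1.mono hm1).measurable)
  have hwm0 : Measurable (fun ω => (1 - p' (X ω)) / (p' (X ω) * e' (X ω))) :=
    ((hwm1.mono hm1).measurable)
  have hχm0 : Measurable (fun ω => if R ω = true ∧ A ω = a then (1:ℝ) else 0) :=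
    ((hχm2.mono hm2).measurable)
  have hχRm0 : Measurable (fun ω => if R ω = true then (1:ℝ) else 0) :=
    ((hχRm2.mono hm2).measurable)
  -- simple bounds
  have hιb : ∀ ω, ‖(if em (X ω) = xt then (1:ℝ) else 0)‖ ≤ 1 := by
    intro ω; split_ifs <;> simp
  have hχb : ∀ ω, ‖(if R ω = true ∧ A ω = a then (1:ℝ) else 0)‖ ≤ 1 := by
    intro ω; split_ifs <;> simp
  have hχRb : ∀ ω, ‖(if R ω = true then (1:ℝ) else 0)‖ ≤ 1 := by
    intro ω; split_ifs <;> simp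
  have hwbd : ∀ᵐ ω ∂P, ‖(1 - p' (X ω)) / (p' (X ω) * e' (X ω))‖ ≤ ε⁻¹ := by
    filter_upwards [hp'e', hp'bd] with ω h1 h2
    have hpos : 0 < p' (X ω) * e' (X ω) := lt_of_lt_of_le hε h1
    rw [Real.norm_eq_abs, abs_div, abs_of_nonneg (by linarith [h2.2] : (0:ℝ) ≤ 1 - p' (X ω)),
        abs_of_pos hpos, div_le_iff₀ hpos]
    have h3 : ε⁻¹ * ε ≤ ε⁻¹ * (p' (X ω) * e' (X ω)) :=
      mul_le_mul_of_nonneg_left h1 (inv_nonneg.mpr hε.le)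
    rw [inv_mul_cancel₀ hε.ne'] at h3
    linarith [h2.2]
  -- basic integrability
  have hone : (1:ENNReal) ≤ 2 := by norm_num
  have hYint : Integrable Y P := hY.integrable hone
  have hg'int : Integrable (fun ω => g' (X ω)) P := hg'L2.integrable hone
  have bmul : ∀ (b : Ω → ℝ) (c : ℝ), Measurable b → (∀ᵐ ω ∂P, ‖b ω‖ ≤ c) →
      ∀ {G : Ω → ℝ}, Integrable G P → Integrable (fun ω => b ω * G ω) P :=
    fun b c hb hbc G hG => hG.bdd_mul hb.aestronglyMeasurable hbc
  have hχint : Integrable (fun ω => if R ω = true ∧ A ω = a then (1:ℝ) else 0) P := by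
    refine (integrable_const (1:ℝ)).mono' hχm0.aestronglyMeasurable ?_
    filter_upwards with ω using hχb ω
  have hχRint : Integrable (fun ω => if R ω = true then (1:ℝ) else 0) P := by
    refine (integrable_const (1:ℝ)).mono' hχRm0.aestronglyMeasurable ?_
    filter_upwards with ω using hχRb ω
  -- bounds on pf
  have hpfbd : ∀ᵐ ω ∂P, 0 ≤ pf (X ω) ∧ pf (X ω) ≤ 1 := by
    have hpf0 : 0 ≤ᵐ[P] condExp (sigmaGen X) P (fun ω => if R ω = true then (1:ℝ) else 0) :=
      condExp_nonneg (by filter_upwards with ω; split_ifs <;> norm_num)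
    have hpf1 : condExp (sigmaGen X) P (fun ω => if R ω = true then (1:ℝ) else 0)
        ≤ᵐ[P] fun _ => (1:ℝ) := by
      have h := condExp_mono (m := sigmaGen X) hχRint (integrable_const (1:ℝ))
        (by filter_upwards with ω; split_ifs <;> norm_num)
      rwa [condExp_const hm1] at h
    filter_upwards [hpf, hpf0, hpf1] with ω h h0 h1
    rw [h]; exact ⟨h0, h1⟩
  -- integrability of ga ∘ X
  have hE2int : Integrable (condExp (sigmaGen (fun ω => (X ω, A ω, R ω))) P Y) P :=
    integrable_condExp
  have hχE2int : Integrable (fun ω => (if R ω = true ∧ A ω = a then (1:ℝ) else 0) *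
      condExp (sigmaGen (fun ω => (X ω, A ω, R ω))) P Y ω) P :=
    bmul _ 1 hχm0 (by filter_upwards with ω using hχb ω) hE2int
  have hχgaint : Integrable (fun ω => (if R ω = true ∧ A ω = a then (1:ℝ) else 0) * ga (X ω)) P :=
    hχE2int.congr hga
  have hgam1 : StronglyMeasurable[sigmaGen X] (fun ω => ga (X ω)) :=
    (hgam.comp hXm1).stronglyMeasurable
  have hgaχint : Integrable (fun ω => ga (X ω) * (if R ω = true ∧ A ω = a then (1:ℝ) else 0)) P :=
    hχgaint.congr (Filter.Eventually.of_forall fun ω => mul_comm _ _)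
  have hgapeint : Integrable (fun ω => ga (X ω) * (pf (X ω) * ea (X ω))) P := by
    have hmul := condExp_mul_of_stronglyMeasurable_left (μ := P) hgam1 hgaχint hχint
    refine (integrable_condExp (m := sigmaGen X)
      (f := (fun ω => ga (X ω)) * fun ω => (if R ω = true ∧ A ω = a then (1:ℝ) else 0))).congr ?_
    filter_upwards [hmul, hea] with ω h1 h2
    rw [h1, Pi.mul_apply, ← h2]
  have hgaint : Integrable (fun ω => ga (X ω)) P := by
    have hb : ∀ᵐ ω ∂P, ‖(pf (X ω) * ea (X ω))⁻¹‖ ≤ ε⁻¹ := by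
      filter_upwards [hεpe] with ω h
      have hpos : 0 < pf (X ω) * ea (X ω) := lt_of_lt_of_le hε h
      rw [Real.norm_eq_abs, abs_of_nonneg (inv_nonneg.mpr hpos.le)]
      exact inv_anti₀ hε h
    have h1 : Integrable (fun ω => (pf (X ω) * ea (X ω))⁻¹ *
        (ga (X ω) * (pf (X ω) * ea (X ω)))) P :=
      bmul _ ε⁻¹ (((hpfm.mul heam).comp hX).inv) hb hgapeint
    refine h1.congr ?_
    filter_upwards [hεpe] with ω h
    have hne : pf (X ω) * ea (X ω) ≠ 0 := (lt_of_lt_of_le hε h).ne'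
    field_simp
    rw [div_eq_iff hne]; ring
  -- the key conditioning identities
  have keyχ : ∀ F : Ω → ℝ, StronglyMeasurable[sigmaGen X] F →
      Integrable (fun ω => F ω * (if R ω = true ∧ A ω = a then (1:ℝ) else 0)) P →
      ∫ ω, F ω * (if R ω = true ∧ A ω = a then (1:ℝ) else 0) ∂P
        = ∫ ω, F ω * (pf (X ω) * ea (X ω)) ∂P := by
    intro F hF hFint
    rw [integral_mul_eq_condexp hm1 hF hχint hFint]
    refine integral_congr_ae ?_
    filter_upwards [hea] with ω h
    rw [← h]
  have keyχR : ∀ F : Ω → ℝ, StronglyMeasurable[sigmaGen X] F →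
      Integrable (fun ω => F ω * (if R ω = true then (1:ℝ) else 0)) P →
      ∫ ω, F ω * (if R ω = true then (1:ℝ) else 0) ∂P = ∫ ω, F ω * pf (X ω) ∂P := by
    intro F hF hFint
    rw [integral_mul_eq_condexp hm1 hF hχRint hFint]
    refine integral_congr_ae ?_
    filter_upwards [hpf] with ω h
    rw [← h]
  -- the set S0
  have hS0m : MeasurableSet {ω | em (X ω) = xt ∧ R ω = false} := by
    have heq : {ω | em (X ω) = xt ∧ R ω = false}
        = X ⁻¹' (em ⁻¹' {xt}) ∩ R ⁻¹' {false} := by ext ω; simp [Set.mem_setOf_eq]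
    rw [heq]
    exact (hX (hem (measurableSet_singleton xt))).inter (hR (measurableSet_singleton false))
  have hind : ∀ F : Ω → ℝ, ∫ ω in {ω | em (X ω) = xt ∧ R ω = false}, F ω ∂P
      = ∫ ω, (if em (X ω) = xt ∧ R ω = false then (1:ℝ) else 0) * F ω ∂P := by
    intro F
    rw [← integral_indicator hS0m]
    refine integral_congr_ae (Filter.Eventually.of_forall fun ω => ?_)
    by_cases h : em (X ω) = xt ∧ R ω = false
    · simp [Set.indicator_apply, Set.mem_setOf_eq, h]
    · simp [Set.indicator_apply, Set.mem_setOf_eq, h]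
  -- integrabilities of the two main terms
  have hI0m0 : Measurable (fun ω => if em (X ω) = xt ∧ R ω = false then (1:ℝ) else 0) :=
    Measurable.ite hS0m measurable_const measurable_const
  have hI0b : ∀ ω, ‖(if em (X ω) = xt ∧ R ω = false then (1:ℝ) else 0)‖ ≤ 1 := by
    intro ω; split_ifs <;> simp
  have hTA : Integrable (fun ω =>
      (if em (X ω) = xt ∧ R ω = false then (1:ℝ) else 0) * g' (X ω)) P :=
    bmul _ 1 hI0m0 (by filter_upwards with ω using hI0b ω) hg'int
  -- the bounded multiplier ι·w·χ
  have hfBm2 : StronglyMeasurable[sigmaGen (fun ω => (X ω, A ω, R ω))]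
      (fun ω => (if em (X ω) = xt then (1:ℝ) else 0) *
        ((1 - p' (X ω)) / (p' (X ω) * e' (X ω))) *
        (if R ω = true ∧ A ω = a then (1:ℝ) else 0)) :=
    ((hιm1.mono hm12).mul (hwm1.mono hm12)).mul hχm2
  have hfBm0 : Measurable (fun ω => (if em (X ω) = xt then (1:ℝ) else 0) *
      ((1 - p' (X ω)) / (p' (X ω) * e' (X ω))) *
      (if R ω = true ∧ A ω = a then (1:ℝ) else 0)) :=
    (hfBm2.mono hm2).measurable
  have hfBbd : ∀ᵐ ω ∂P, ‖(if em (X ω) = xt then (1:ℝ) else 0) *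
      ((1 - p' (X ω)) / (p' (X ω) * e' (X ω))) *
      (if R ω = true ∧ A ω = a then (1:ℝ) else 0)‖ ≤ ε⁻¹ := by
    filter_upwards [hwbd] with ω h
    rw [norm_mul, norm_mul]
    have h1 := hιb ω
    have h2 := hχb ω
    have h3 := norm_nonneg ((if em (X ω) = xt then (1:ℝ) else 0))
    have h4 := norm_nonneg ((1 - p' (X ω)) / (p' (X ω) * e' (X ω)))
    have h5 := norm_nonneg ((if R ω = true ∧ A ω = a then (1:ℝ) else 0))
    have h6 : ‖(if em (X ω) = xt then (1:ℝ) else 0)‖ *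
        ‖(1 - p' (X ω)) / (p' (X ω) * e' (X ω))‖ ≤ 1 * ε⁻¹ :=
      mul_le_mul h1 h h4 zero_le_one
    have h7 := mul_le_mul h6 h2 h5 (by positivity : (0:ℝ) ≤ 1 * ε⁻¹)
    linarith
  have hfBY : Integrable (fun ω => ((if em (X ω) = xt then (1:ℝ) else 0) *
      ((1 - p' (X ω)) / (p' (X ω) * e' (X ω))) *
      (if R ω = true ∧ A ω = a then (1:ℝ) else 0)) * Y ω) P :=
    bmul _ ε⁻¹ hfBm0 hfBbd hYint
  have hfBg' : Integrable (fun ω => ((if em (X ω) = xt then (1:ℝ) else 0) *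
      ((1 - p' (X ω)) / (p' (X ω) * e' (X ω))) *
      (if R ω = true ∧ A ω = a then (1:ℝ) else 0)) * g' (X ω)) P :=
    bmul _ ε⁻¹ hfBm0 hfBbd hg'int
  have hfBga : Integrable (fun ω => ((if em (X ω) = xt then (1:ℝ) else 0) *
      ((1 - p' (X ω)) / (p' (X ω) * e' (X ω))) *
      (if R ω = true ∧ A ω = a then (1:ℝ) else 0)) * ga (X ω)) P :=
    bmul _ ε⁻¹ hfBm0 hfBbd hgaint
  have hTB : Integrable (fun ω =>
      (if A ω = a ∧ em (X ω) = xt ∧ R ω = true then (1:ℝ) else 0) *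
        ((1 - p' (X ω)) / (p' (X ω) * e' (X ω))) * (Y ω - g' (X ω))) P := by
    refine (hfBY.sub hfBg').congr ?_
    filter_upwards with ω
    by_cases h1 : A ω = a <;> by_cases h2 : em (X ω) = xt <;> by_cases h3 : R ω = true <;>
      simp [h1, h2, h3] <;> ring
  -- split the integral of H
  have hsplit : ∫ ω, H ω ∂P = γ *
      ((∫ ω, (if em (X ω) = xt ∧ R ω = false then (1:ℝ) else 0) * g' (X ω) ∂P) +
       (∫ ω, (if A ω = a ∧ em (X ω) = xt ∧ R ω = true then (1:ℝ) else 0) *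
          ((1 - p' (X ω)) / (p' (X ω) * e' (X ω))) * (Y ω - g' (X ω)) ∂P)) := by
    rw [hH, integral_const_mul, integral_add hTA hTB]
  -- step A: replace Y by ga in the second term
  have hstepA : ∫ ω, (if A ω = a ∧ em (X ω) = xt ∧ R ω = true then (1:ℝ) else 0) *
      ((1 - p' (X ω)) / (p' (X ω) * e' (X ω))) * (Y ω - g' (X ω)) ∂P
      = (∫ ω, ((if em (X ω) = xt then (1:ℝ) else 0) *
          ((1 - p' (X ω)) / (p' (X ω) * e' (X ω))) *
          (if R ω = true ∧ A ω = a then (1:ℝ) else 0)) * ga (X ω) ∂P)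
        - (∫ ω, ((if em (X ω) = xt then (1:ℝ) else 0) *
          ((1 - p' (X ω)) / (p' (X ω) * e' (X ω))) *
          (if R ω = true ∧ A ω = a then (1:ℝ) else 0)) * g' (X ω) ∂P) := by
    have h1 : ∫ ω, (if A ω = a ∧ em (X ω) = xt ∧ R ω = true then (1:ℝ) else 0) *
        ((1 - p' (X ω)) / (p' (X ω) * e' (X ω))) * (Y ω - g' (X ω)) ∂P
        = (∫ ω, ((if em (X ω) = xt then (1:ℝ) else 0) *
            ((1 - p' (X ω)) / (p' (X ω) * e' (X ω))) *
            (if R ω = true ∧ A ω = a then (1:ℝ) else 0)) * Y ω ∂P)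
          - (∫ ω, ((if em (X ω) = xt then (1:ℝ) else 0) *
            ((1 - p' (X ω)) / (p' (X ω) * e' (X ω))) *
            (if R ω = true ∧ A ω = a then (1:ℝ) else 0)) * g' (X ω) ∂P) := by
      rw [← integral_sub hfBY hfBg']
      refine integral_congr_ae (Filter.Eventually.of_forall fun ω => ?_)
      by_cases h1 : A ω = a <;> by_cases h2 : em (X ω) = xt <;> by_cases h3 : R ω = true <;>
        simp [h1, h2, h3] <;> ring
    rw [h1]
    congr 1
    rw [integral_mul_eq_condexp hm2 hfBm2 hYint hfBY]
    refine integral_congr_ae ?_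
    filter_upwards [hga] with ω h
    show _ * _ = _ * _
    calc (if em (X ω) = xt then (1:ℝ) else 0) *
          ((1 - p' (X ω)) / (p' (X ω) * e' (X ω))) *
          (if R ω = true ∧ A ω = a then (1:ℝ) else 0) *
          condExp (sigmaGen (fun ω => (X ω, A ω, R ω))) P Y ω
        = (if em (X ω) = xt then (1:ℝ) else 0) *
          ((1 - p' (X ω)) / (p' (X ω) * e' (X ω))) *
          ((if R ω = true ∧ A ω = a then (1:ℝ) else 0) *
            condExp (sigmaGen (fun ω => (X ω, A ω, R ω))) P Y ω) := by ring
      _ = (if em (X ω) = xt then (1:ℝ) else 0) *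
          ((1 - p' (X ω)) / (p' (X ω) * e' (X ω))) *
          ((if R ω = true ∧ A ω = a then (1:ℝ) else 0) * ga (X ω)) := by rw [h]
      _ = (if em (X ω) = xt then (1:ℝ) else 0) *
          ((1 - p' (X ω)) / (p' (X ω) * e' (X ω))) *
          (if R ω = true ∧ A ω = a then (1:ℝ) else 0) * ga (X ω) := by ring
  rcases hrobust with hgg | ⟨hp, he⟩
  · -- case (i): outcome model correct
    have e1 : ∫ ω, (if em (X ω) = xt ∧ R ω = false then (1:ℝ) else 0) * g' (X ω) ∂P
        = ∫ ω in {ω | em (X ω) = xt ∧ R ω = false}, ga (X ω) ∂P := by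
      rw [hind (fun ω => ga (X ω))]
      refine integral_congr_ae ?_
      filter_upwards [hgg] with ω h
      rw [h]
    have e2 : ∫ ω, ((if em (X ω) = xt then (1:ℝ) else 0) *
        ((1 - p' (X ω)) / (p' (X ω) * e' (X ω))) *
        (if R ω = true ∧ A ω = a then (1:ℝ) else 0)) * g' (X ω) ∂P
        = ∫ ω, ((if em (X ω) = xt then (1:ℝ) else 0) *
        ((1 - p' (X ω)) / (p' (X ω) * e' (X ω))) *
        (if R ω = true ∧ A ω = a then (1:ℝ) else 0)) * ga (X ω) ∂P := by
      refine integral_congr_ae ?_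
      filter_upwards [hgg] with ω h
      rw [h]
    rw [hsplit, hstepA, e2, sub_self, add_zero, e1, hψ, hγ, div_eq_mul_inv]
    exact mul_comm _ _
  · -- case (ii): participation / propensity models correct
    have hwpe : ∀ᵐ ω ∂P, ((1 - p' (X ω)) / (p' (X ω) * e' (X ω))) * (pf (X ω) * ea (X ω))
        = 1 - pf (X ω) := by
      filter_upwards [hp, he, hεpe] with ω h1 h2 h3
      rw [h1, h2]
      have hne : pf (X ω) * ea (X ω) ≠ 0 := (lt_of_lt_of_le hε h3).ne'
      field_simp
      rw [div_eq_iff hne]; ring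
    have key2 : ∀ F : Ω → ℝ, StronglyMeasurable[sigmaGen X] F → Integrable F P →
        ∫ ω, ((if em (X ω) = xt then (1:ℝ) else 0) *
            ((1 - p' (X ω)) / (p' (X ω) * e' (X ω))) *
            (if R ω = true ∧ A ω = a then (1:ℝ) else 0)) * F ω ∂P
          = ∫ ω, (if em (X ω) = xt then (1:ℝ) else 0) * (1 - pf (X ω)) * F ω ∂P := by
      intro F hFm1 hFint
      have hGm1 : StronglyMeasurable[sigmaGen X]
          (fun ω => (if em (X ω) = xt then (1:ℝ) else 0) *
            ((1 - p' (X ω)) / (p' (X ω) * e' (X ω))) * F ω) := (hιm1.mul hwm1).mul hFm1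
      have hGχint : Integrable (fun ω => ((if em (X ω) = xt then (1:ℝ) else 0) *
          ((1 - p' (X ω)) / (p' (X ω) * e' (X ω))) * F ω) *
          (if R ω = true ∧ A ω = a then (1:ℝ) else 0)) P := by
        refine (bmul _ ε⁻¹ hfBm0 hfBbd hFint).congr ?_
        filter_upwards with ω
        ring
      have h0 : ∫ ω, ((if em (X ω) = xt then (1:ℝ) else 0) *
          ((1 - p' (X ω)) / (p' (X ω) * e' (X ω))) *
          (if R ω = true ∧ A ω = a then (1:ℝ) else 0)) * F ω ∂P
          = ∫ ω, ((if em (X ω) = xt then (1:ℝ) else 0) *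
          ((1 - p' (X ω)) / (p' (X ω) * e' (X ω))) * F ω) *
          (if R ω = true ∧ A ω = a then (1:ℝ) else 0) ∂P :=
        integral_congr_ae (Filter.Eventually.of_forall fun ω => by ring)
      rw [h0, keyχ _ hGm1 hGχint]
      refine integral_congr_ae ?_
      filter_upwards [hwpe] with ω h
      calc (if em (X ω) = xt then (1:ℝ) else 0) *
            ((1 - p' (X ω)) / (p' (X ω) * e' (X ω))) * F ω * (pf (X ω) * ea (X ω))
          = (if em (X ω) = xt then (1:ℝ) else 0) *
            (((1 - p' (X ω)) / (p' (X ω) * e' (X ω))) * (pf (X ω) * ea (X ω))) * F ω := by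
            ring
        _ = (if em (X ω) = xt then (1:ℝ) else 0) * (1 - pf (X ω)) * F ω := by rw [h]
    have key3 : ∀ F : Ω → ℝ, StronglyMeasurable[sigmaGen X] F → Measurable F → Integrable F P →
        ∫ ω, (if em (X ω) = xt ∧ R ω = false then (1:ℝ) else 0) * F ω ∂P
          = ∫ ω, (if em (X ω) = xt then (1:ℝ) else 0) * (1 - pf (X ω)) * F ω ∂P := by
      intro F hFm1 hFm0 hFint
      have hιF : Integrable (fun ω => (if em (X ω) = xt then (1:ℝ) else 0) * F ω) P :=
        bmul _ 1 hιm0 (Filter.Eventually.of_forall hιb) hFint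
      have hιFχR : Integrable (fun ω => ((if em (X ω) = xt then (1:ℝ) else 0) * F ω) *
          (if R ω = true then (1:ℝ) else 0)) P := by
        refine (bmul (fun ω => (if em (X ω) = xt then (1:ℝ) else 0) *
            (if R ω = true then (1:ℝ) else 0)) 1 (hιm0.mul hχRm0) ?_ hFint).congr ?_
        · filter_upwards with ω
          rw [norm_mul]
          calc ‖(if em (X ω) = xt then (1:ℝ) else 0)‖ * ‖(if R ω = true then (1:ℝ) else 0)‖
              ≤ 1 * 1 := mul_le_mul (hιb ω) (hχRb ω) (norm_nonneg _) zero_le_one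
            _ = 1 := by norm_num
        · filter_upwards with ω
          ring
      have hιFpf : Integrable (fun ω => ((if em (X ω) = xt then (1:ℝ) else 0) * F ω) *
          pf (X ω)) P := by
        refine (bmul (fun ω => (if em (X ω) = xt then (1:ℝ) else 0) * pf (X ω)) 1
            (hιm0.mul (hpfm.comp hX)) ?_ hFint).congr ?_
        · filter_upwards [hpfbd] with ω hb
          rw [norm_mul]
          calc ‖(if em (X ω) = xt then (1:ℝ) else 0)‖ * ‖pf (X ω)‖
              ≤ 1 * 1 := by
                refine mul_le_mul (hιb ω) ?_ (norm_nonneg _) zero_le_one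
                rw [Real.norm_eq_abs, abs_of_nonneg hb.1]
                exact hb.2
            _ = 1 := by norm_num
        · filter_upwards with ω
          ring
      have h0 : ∫ ω, (if em (X ω) = xt ∧ R ω = false then (1:ℝ) else 0) * F ω ∂P
          = (∫ ω, (if em (X ω) = xt then (1:ℝ) else 0) * F ω ∂P)
            - ∫ ω, ((if em (X ω) = xt then (1:ℝ) else 0) * F ω) *
              (if R ω = true then (1:ℝ) else 0) ∂P := by
        rw [← integral_sub hιF hιFχR]
        refine integral_congr_ae (Filter.Eventually.of_forall fun ω => ?_)
        by_cases h1 : em (X ω) = xt <;> rcases Bool.dichotomy (R ω) with h2 | h2 <;>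
          simp [h1, h2]
      have hkey1 := keyχR (fun ω => (if em (X ω) = xt then (1:ℝ) else 0) * F ω)
        (hιm1.mul hFm1) hιFχR
      rw [h0, hkey1, ← integral_sub hιF hιFpf]
      refine integral_congr_ae (Filter.Eventually.of_forall fun ω => ?_)
      ring
    have hg'm1 : StronglyMeasurable[sigmaGen X] (fun ω => g' (X ω)) :=
      (hg'm.comp hXm1).stronglyMeasurable
    have key2ga := key2 (fun ω => ga (X ω)) hgam1 hgaint
    have key2g' := key2 (fun ω => g' (X ω)) hg'm1 hg'int
    have key3ga := key3 (fun ω => ga (X ω)) hgam1 (hgam.comp hX) hgaint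
    have key3g' := key3 (fun ω => g' (X ω)) hg'm1 (hg'm.comp hX) hg'int
    have e3 : ∫ ω in {ω | em (X ω) = xt ∧ R ω = false}, ga (X ω) ∂P
        = ∫ ω, (if em (X ω) = xt then (1:ℝ) else 0) * (1 - pf (X ω)) * ga (X ω) ∂P := by
      rw [hind (fun ω => ga (X ω)), key3ga]
    rw [hsplit, hstepA, key2ga, key2g', key3g', hψ, hγ, e3, div_eq_mul_inv]
    ring
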